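/- Let X be a Urysohn space (any two distinct points of X have disjoint closed neighborhoods). Then |X| ≤ 2^{sL_θ(X) · κ_θ(X)}, where the exponent is the (cardinal) product of the two cardinal invariants. -/

import Mathlib

open Cardinal Set

universe u

/-- The θⁿ-closure: `x ∈ thetaCl n M` iff there is NO chain of open sets
`U 0 ⊆ U 1 ⊆ ... ⊆ U (n-1)` with `x ∈ U 0`, `closure (U i) ⊆ U (i+1)` for `i+1 < n`,
and `closure (U (n-1)) ∩ M = ∅`. -/
def thetaCl (n : ℕ) {X : Type u} [TopologicalSpace X] (M : Set X) : Set X :=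
  {x | ¬ ∃ U : ℕ → Set X, (∀ i, i < n → IsOpen (U i)) ∧ x ∈ U 0 ∧
    (∀ i, i + 1 < n → closure (U i) ⊆ U (i + 1)) ∧
    closure (U (n - 1)) ∩ M = ∅}

/-- The θ₀ⁿ-closure: as `thetaCl` but the last set itself misses `M`. -/
def theta0Cl (n : ℕ) {X : Type u} [TopologicalSpace X] (M : Set X) : Set X :=
  {x | ¬ ∃ U : ℕ → Set X, (∀ i, i < n → IsOpen (U i)) ∧ x ∈ U 0 ∧
    (∀ i, i + 1 < n → closure (U i) ⊆ U (i + 1)) ∧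
    U (n - 1) ∩ M = ∅}

/-- `X` is an S(m)-space: any two distinct points are S(m)-separated. -/
def SSpace (m : ℕ) (X : Type u) [TopologicalSpace X] : Prop :=
  ∀ x y : X, x ≠ y → x ∉ thetaCl m ({y} : Set X)

/-- `U` is an n-hull of `A`: there are open sets `V 0, ..., V (n-1) = U` with
`A ⊆ V 0` and `closure (V i) ⊆ V (i+1)` for `i+1 < n`. -/
def IsNHull (n : ℕ) {X : Type u} [TopologicalSpace X] (A U : Set X) : Prop :=
  ∃ V : ℕ → Set X, (∀ i, i < n → IsOpen (V i)) ∧ A ⊆ V 0 ∧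
    (∀ i, i + 1 < n → closure (V i) ⊆ V (i + 1)) ∧ U = V (n - 1)

/-- A closed n-hull of `A` is the closure of an n-hull of `A`. -/
def IsClosedNHull (n : ℕ) {X : Type u} [TopologicalSpace X] (A W : Set X) : Prop :=
  ∃ U : Set X, IsNHull n A U ∧ W = closure U

/-- `κ_{θ(n)}(X)`: the smallest infinite cardinal `κ` such that every point `x` has a
family of at most `κ` closed n-hulls of `{x}` which is cofinal (under `⊇`) in all
closed n-hulls of `{x}`. -/
noncomputable def kappaTheta (n : ℕ) (X : Type u) [TopologicalSpace X] : Cardinal.{u} :=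
  sInf {κ : Cardinal.{u} | Cardinal.aleph0 ≤ κ ∧ ∀ x : X, ∃ 𝒱 : Set (Set X),
    #𝒱 ≤ κ ∧ (∀ W ∈ 𝒱, IsClosedNHull n ({x} : Set X) W) ∧
    ∀ W : Set X, IsClosedNHull n ({x} : Set X) W → ∃ B ∈ 𝒱, B ⊆ W}

/-- `κ_{θ₀(n)}(X)`: as `kappaTheta` but with (open) n-hulls of `{x}`. -/
noncomputable def kappaTheta0 (n : ℕ) (X : Type u) [TopologicalSpace X] : Cardinal.{u} :=
  sInf {κ : Cardinal.{u} | Cardinal.aleph0 ≤ κ ∧ ∀ x : X, ∃ 𝒱 : Set (Set X),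
    #𝒱 ≤ κ ∧ (∀ W ∈ 𝒱, IsNHull n ({x} : Set X) W) ∧
    ∀ W : Set X, IsNHull n ({x} : Set X) W → ∃ B ∈ 𝒱, B ⊆ W}

/-- `sL_{θ(n)}(X)`: the smallest infinite cardinal `κ` such that for every `A ⊆ X` and
every family `𝒰` of open sets with `thetaCl n A ⊆ ⋃₀ 𝒰` there is `𝒱 ⊆ 𝒰` with
`#𝒱 ≤ κ` and `A ⊆ closure (⋃₀ 𝒱)`. -/
noncomputable def sLTheta (n : ℕ) (X : Type u) [TopologicalSpace X] : Cardinal.{u} :=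
  sInf {κ : Cardinal.{u} | Cardinal.aleph0 ≤ κ ∧ ∀ (A : Set X) (𝒰 : Set (Set X)),
    (∀ U ∈ 𝒰, IsOpen U) → thetaCl n A ⊆ ⋃₀ 𝒰 →
    ∃ 𝒱 ⊆ 𝒰, #𝒱 ≤ κ ∧ A ⊆ closure (⋃₀ 𝒱)}

/-- `sL_{θ₀(n)}(X)`: the smallest infinite cardinal `κ` such that for every θ₀ⁿ-closed
`A ⊆ X` and every family `𝒰` of open sets covering `A` there is `𝒱 ⊆ 𝒰` with
`#𝒱 ≤ κ` and `A ⊆ closure (⋃₀ 𝒱)`. -/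
noncomputable def sLTheta0 (n : ℕ) (X : Type u) [TopologicalSpace X] : Cardinal.{u} :=
  sInf {κ : Cardinal.{u} | Cardinal.aleph0 ≤ κ ∧ ∀ (A : Set X) (𝒰 : Set (Set X)),
    theta0Cl n A = A → (∀ U ∈ 𝒰, IsOpen U) → A ⊆ ⋃₀ 𝒰 →
    ∃ 𝒱 ⊆ 𝒰, #𝒱 ≤ κ ∧ A ⊆ closure (⋃₀ 𝒱)}

/-- `sL_{s(n)}(X)`: the smallest infinite cardinal `κ` such that for every θⁿ-closed
`A ⊆ X` and every S(n)-cover `𝒰` with respect to `A` (i.e. `A` is covered by the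
θⁿ-interiors of members of `𝒰`) there is `𝒱 ⊆ 𝒰` with `#𝒱 ≤ κ` and
`A ⊆ closure (⋃₀ 𝒱)`. -/
noncomputable def sLs (n : ℕ) (X : Type u) [TopologicalSpace X] : Cardinal.{u} :=
  sInf {κ : Cardinal.{u} | Cardinal.aleph0 ≤ κ ∧ ∀ (A : Set X) (𝒰 : Set (Set X)),
    thetaCl n A = A → (∀ U ∈ 𝒰, IsOpen U) →
    (A ⊆ ⋃ U ∈ 𝒰, (thetaCl n Uᶜ)ᶜ) →
    ∃ 𝒱 ⊆ 𝒰, #𝒱 ≤ κ ∧ A ⊆ closure (⋃₀ 𝒱)}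

/-- `qM_{θ(n)}(X)`: the θ(n)-quasi-Menger number. -/
noncomputable def qMTheta (n : ℕ) (X : Type u) [TopologicalSpace X] : Cardinal.{u} :=
  sInf {κ : Cardinal.{u} | Cardinal.aleph0 ≤ κ ∧ ∀ A : Set X, IsClosed A →
    ∀ 𝒰 : κ.out → Set (Set X), (∀ α, ∀ U ∈ 𝒰 α, IsOpen U) →
    A ⊆ ⋃ α, ⋃₀ (𝒰 α) →
    ∃ 𝒱 : κ.out → Set (Set X), (∀ α, 𝒱 α ⊆ 𝒰 α ∧ (𝒱 α).Finite) ∧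
      A ⊆ ⋃ α, thetaCl n (⋃₀ (𝒱 α))}

/-- `qM_{θ₀(n)}(X)`: the θ₀(n)-quasi-Menger number. -/
noncomputable def qMTheta0 (n : ℕ) (X : Type u) [TopologicalSpace X] : Cardinal.{u} :=
  sInf {κ : Cardinal.{u} | Cardinal.aleph0 ≤ κ ∧ ∀ A : Set X, IsClosed A →
    ∀ 𝒰 : κ.out → Set (Set X), (∀ α, ∀ U ∈ 𝒰 α, IsOpen U) →
    A ⊆ ⋃ α, ⋃₀ (𝒰 α) →
    ∃ 𝒱 : κ.out → Set (Set X), (∀ α, 𝒱 α ⊆ 𝒰 α ∧ (𝒱 α).Finite) ∧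
      A ⊆ ⋃ α, theta0Cl n (⋃₀ (𝒱 α))}

/-! Put `κ = sL_θ(X) · κ_θ(X)` and fix at every point `x` a family `𝒪 x` of at most `κ` open
neighbourhoods whose closures are cofinal among the closed neighbourhoods `cl U` of `x`.

In a Urysohn space a point `y ∈ cl_θ S` is determined by choosing, for each pair of members of
`𝒪 y`, a point of `S` in both of their closures; hence `|cl_θ S| ≤ |S| ^ κ`.

A closing-off argument of length `κ⁺` yields `H ⊆ X` with `|H| ≤ 2 ^ κ` such that for every
`S ⊆ H` with `|S| ≤ κ`, `H` contains `cl_θ S` and, for every family `𝒱 ⊆ ⋃_{x ∈ S} 𝒪 x` of size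
at most `κ` with `cl (⋃ 𝒱) ≠ X`, a point outside `cl (⋃ 𝒱)`. Then `H` is θ-closed. If `q ∉ H`,
there is an open `P ∋ q` with `cl P ∩ H = ∅`; the members of the `𝒪 x`, `x ∈ H`, missing `P` cover
`H = cl_θ H`, so `sL_θ(X) ≤ κ` gives `κ` of them whose union is dense in `H` but not in `X`, and `H`
contains a point outside the closure of that union — a contradiction. So `H = X`. -/

section ClosingOff

variable {α : Type u} {κ : Cardinal.{u}}

theorem exists_gt_of_mk_le_of_ord_succ (hκ : ℵ₀ ≤ κ) {s : Set (Order.succ κ).ord.ToType}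
    (hs : #s ≤ κ) : ∃ a, ∀ b ∈ s, b < a := by
  by_contra! h
  have hcof := Order.cof_le (show IsCofinal s from h)
  rw [Ordinal.cof_toType, (isRegular_succ hκ).cof_ord] at hcof
  exact (Order.lt_succ κ).not_ge (hcof.trans hs)

theorem mk_toType_ord_succ_le : #(Order.succ κ).ord.ToType ≤ 2 ^ κ := by
  rw [mk_toType, card_ord]
  exact Order.succ_le_of_lt (cantor κ)

variable (κ) (F : Set α → Set α)

def closingStep (B : Set α) : Set α :=
  B ∪ ⋃ S : {S : Set α // S ⊆ B ∧ #S ≤ κ}, F S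

def closingStage : (Order.succ κ).ord.ToType → Set α :=
  WellFoundedLT.fix fun j stage => ⋃ i : Iio j, closingStep κ F (stage i i.2)

variable {κ F}

theorem subset_closingStep {S B : Set α} (hSB : S ⊆ B) (hSκ : #S ≤ κ) :
    F S ⊆ closingStep κ F B :=
  subset_union_of_subset_right
    (subset_iUnion (fun S' : {S' : Set α // S' ⊆ B ∧ #S' ≤ κ} => F S') ⟨S, hSB, hSκ⟩) _

theorem closingStage_eq (j : (Order.succ κ).ord.ToType) :
    closingStage κ F j = ⋃ i : Iio j, closingStep κ F (closingStage κ F i) :=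
  WellFoundedLT.fix_eq _ j

theorem closingStep_closingStage_subset {i j : (Order.succ κ).ord.ToType} (h : i < j) :
    closingStep κ F (closingStage κ F i) ⊆ closingStage κ F j := by
  rw [closingStage_eq j]
  exact subset_iUnion_of_subset ⟨i, h⟩ subset_rfl

theorem closingStage_mono {i j : (Order.succ κ).ord.ToType} (h : i ≤ j) :
    closingStage κ F i ⊆ closingStage κ F j := by
  rcases h.eq_or_lt with rfl | h
  · exact subset_rfl
  · exact subset_union_left.trans (closingStep_closingStage_subset h)

theorem mk_closingStep_le (hκ : ℵ₀ ≤ κ) (hF : ∀ S : Set α, #S ≤ κ → #(F S) ≤ 2 ^ κ) {B : Set α}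
    (hB : #B ≤ 2 ^ κ) : #(closingStep κ F B) ≤ 2 ^ κ := by
  have h2κ : ℵ₀ ≤ 2 ^ κ := hκ.trans (cantor κ).le
  have hsmall : #{S : Set α // S ⊆ B ∧ #S ≤ κ} ≤ 2 ^ κ :=
    calc #{S : Set α // S ⊆ B ∧ #S ≤ κ}
      _ ≤ max #B ℵ₀ ^ κ := mk_bounded_subset_le B κ
      _ ≤ (2 ^ κ) ^ κ := power_le_power_right (max_le hB h2κ)
      _ = 2 ^ κ := by rw [← power_mul, mul_eq_self hκ]
  calc #(closingStep κ F B)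
    _ ≤ #B + #(⋃ S : {S : Set α // S ⊆ B ∧ #S ≤ κ}, F S) := mk_union_le _ _
    _ ≤ 2 ^ κ + 2 ^ κ * 2 ^ κ :=
        add_le_add hB <| (mk_iUnion_le _).trans <|
          mul_le_mul' hsmall (ciSup_le' fun S => hF S S.2.2)
    _ = 2 ^ κ := by rw [mul_eq_self h2κ, add_eq_self h2κ]

theorem mk_closingStage_le (hκ : ℵ₀ ≤ κ) (hF : ∀ S : Set α, #S ≤ κ → #(F S) ≤ 2 ^ κ)
    (j : (Order.succ κ).ord.ToType) : #(closingStage κ F j) ≤ 2 ^ κ := by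
  induction j using WellFoundedLT.induction with
  | ind j ih =>
    rw [closingStage_eq]
    calc #(⋃ i : Iio j, closingStep κ F (closingStage κ F i))
      _ ≤ #(Iio j) * ⨆ i : Iio j, #(closingStep κ F (closingStage κ F i)) := mk_iUnion_le _
      _ ≤ 2 ^ κ * 2 ^ κ :=
          mul_le_mul' ((mk_set_le _).trans mk_toType_ord_succ_le)
            (ciSup_le' fun i => mk_closingStep_le hκ hF (ih i i.2))
      _ = 2 ^ κ := mul_eq_self (hκ.trans (cantor κ).le)

theorem exists_mk_le_two_power_closed_under_small (hκ : ℵ₀ ≤ κ)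
    (hF : ∀ S : Set α, #S ≤ κ → #(F S) ≤ 2 ^ κ) :
    ∃ H : Set α, #H ≤ 2 ^ κ ∧ ∀ S ⊆ H, #S ≤ κ → F S ⊆ H := by
  refine ⟨⋃ j, closingStage κ F j, ?_, fun S hSH hSκ => ?_⟩
  · calc #(⋃ j, closingStage κ F j)
      _ ≤ #(Order.succ κ).ord.ToType * ⨆ j, #(closingStage κ F j) := mk_iUnion_le _
      _ ≤ 2 ^ κ * 2 ^ κ :=
          mul_le_mul' mk_toType_ord_succ_le (ciSup_le' (mk_closingStage_le hκ hF))
      _ = 2 ^ κ := mul_eq_self (hκ.trans (cantor κ).le)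
  · choose idx hidx using fun s : S => mem_iUnion.1 (hSH s.2)
    obtain ⟨j, hj⟩ := exists_gt_of_mk_le_of_ord_succ hκ (mk_range_le.trans hSκ)
    obtain ⟨j', hj'⟩ := exists_gt_of_mk_le_of_ord_succ (s := {j}) hκ
      ((mk_singleton j).le.trans (one_le_aleph0.trans hκ))
    have hSj : S ⊆ closingStage κ F j := fun s hs =>
      closingStage_mono (hj _ (mem_range_self ⟨s, hs⟩)).le (hidx ⟨s, hs⟩)
    calc F S
      _ ⊆ closingStep κ F (closingStage κ F j) := subset_closingStep hSj hSκ
      _ ⊆ closingStage κ F j' := closingStep_closingStage_subset (hj' j rfl)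
      _ ⊆ ⋃ j, closingStage κ F j := subset_iUnion _ _

end ClosingOff

theorem exists_subset_mk_le_of_subset_biUnion {ι α : Type u} {t : ι → Set α} {s : Set ι}
    {v : Set α} (h : v ⊆ ⋃ i ∈ s, t i) : ∃ s' ⊆ s, #s' ≤ #v ∧ v ⊆ ⋃ i ∈ s', t i := by
  choose idx hidx hmem using fun a : v => mem_iUnion₂.1 (h a.2)
  exact ⟨range idx, range_subset_iff.2 hidx, mk_range_le,
    fun a ha => mem_biUnion (mem_range_self ⟨a, ha⟩) (hmem ⟨a, ha⟩)⟩

section ThetaClosure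

variable {X : Type u} [TopologicalSpace X]

theorem mem_thetaCl_one_iff {M : Set X} {x : X} :
    x ∈ thetaCl 1 M ↔ ∀ U, IsOpen U → x ∈ U → (closure U ∩ M).Nonempty := by
  simp only [thetaCl, mem_ofPred_eq, not_exists, not_and, nonempty_iff_ne_empty]
  constructor
  · exact fun hx U hU hxU => hx (fun _ => U) (fun _ _ => hU) hxU (fun _ h => by omega)
  · exact fun hx U hU hxU _ => hx (U 0) (hU 0 one_pos) hxU

theorem subset_thetaCl_one (M : Set X) : M ⊆ thetaCl 1 M := fun x hx =>
  mem_thetaCl_one_iff.2 fun _ _ hxU => ⟨x, subset_closure hxU, hx⟩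

theorem isClosedNHull_one_singleton_iff {x : X} {W : Set X} :
    IsClosedNHull 1 {x} W ↔ ∃ U, IsOpen U ∧ x ∈ U ∧ W = closure U := by
  constructor
  · rintro ⟨U, ⟨V, hV, hxV, -, rfl⟩, rfl⟩
    exact ⟨V 0, hV 0 one_pos, hxV rfl, rfl⟩
  · rintro ⟨U, hU, hxU, rfl⟩
    exact ⟨U, ⟨fun _ => U, fun _ _ => hU, singleton_subset_iff.2 hxU, fun _ h => by omega, rfl⟩,
      rfl⟩

/-- The closures of the members of `𝒪` form a family as in the definition of `κ_θ` at `x`;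
we keep the open sets rather than their closures. -/
def IsThetaBase (x : X) (𝒪 : Set (Set X)) : Prop :=
  (∀ O ∈ 𝒪, IsOpen O ∧ x ∈ O) ∧ ∀ U, IsOpen U → x ∈ U → ∃ O ∈ 𝒪, closure O ⊆ closure U

namespace IsThetaBase

variable {x : X} {𝒪 : Set (Set X)}

theorem nonempty (h : IsThetaBase x 𝒪) : 𝒪.Nonempty :=
  let ⟨O, hO, _⟩ := h.2 univ isOpen_univ (mem_univ x)
  ⟨O, hO⟩

theorem mem_thetaCl_one_iff (h : IsThetaBase x 𝒪) {M : Set X} :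
    x ∈ thetaCl 1 M ↔ ∀ O ∈ 𝒪, (closure O ∩ M).Nonempty := by
  refine ⟨fun hx O hO => _root_.mem_thetaCl_one_iff.1 hx O (h.1 O hO).1 (h.1 O hO).2,
    fun hM => _root_.mem_thetaCl_one_iff.2 fun U hU hxU => ?_⟩
  obtain ⟨O, hO, hOU⟩ := h.2 U hU hxU
  exact (hM O hO).mono (inter_subset_inter_left _ hOU)

theorem exists_subset_mem_thetaCl_one (h : IsThetaBase x 𝒪) {M : Set X}
    (hx : x ∈ thetaCl 1 M) : ∃ S ⊆ M, #S ≤ #𝒪 ∧ x ∈ thetaCl 1 S := by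
  choose p hp using fun O : 𝒪 => h.mem_thetaCl_one_iff.1 hx O O.2
  exact ⟨range p, range_subset_iff.2 fun O => (hp O).2, mk_range_le,
    h.mem_thetaCl_one_iff.2 fun O hO => ⟨p ⟨O, hO⟩, (hp ⟨O, hO⟩).1, mem_range_self _⟩⟩

theorem exists_mem_closure_inter_closure (h : IsThetaBase x 𝒪) {M : Set X}
    (hx : x ∈ thetaCl 1 M) {O O' : Set X} (hO : O ∈ 𝒪) (hO' : O' ∈ 𝒪) :
    ∃ p ∈ M, p ∈ closure O ∩ closure O' := by
  obtain ⟨p, hpOO', hpM⟩ := _root_.mem_thetaCl_one_iff.1 hx _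
    ((h.1 O hO).1.inter (h.1 O' hO').1) ⟨(h.1 O hO).2, (h.1 O' hO').2⟩
  exact ⟨p, hpM, closure_inter_subset_inter_closure _ _ hpOO'⟩

end IsThetaBase

theorem kappaTheta_spec (n : ℕ) (X : Type u) [TopologicalSpace X] :
    ℵ₀ ≤ kappaTheta n X ∧ ∀ x : X, ∃ 𝒱 : Set (Set X), #𝒱 ≤ kappaTheta n X ∧
      (∀ W ∈ 𝒱, IsClosedNHull n {x} W) ∧ ∀ W, IsClosedNHull n {x} W → ∃ B ∈ 𝒱, B ⊆ W :=
  (csInf_mem ⟨max ℵ₀ #(Set X), le_max_left _ _, fun x =>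
    ⟨{W | IsClosedNHull n {x} W}, (mk_set_le _).trans (le_max_right _ _),
      fun _ hW => hW, fun W hW => ⟨W, hW, subset_rfl⟩⟩⟩ : kappaTheta n X ∈ _)

theorem sLTheta_one_spec (X : Type u) [TopologicalSpace X] :
    ℵ₀ ≤ sLTheta 1 X ∧ ∀ (A : Set X) (𝒰 : Set (Set X)), (∀ U ∈ 𝒰, IsOpen U) →
      thetaCl 1 A ⊆ ⋃₀ 𝒰 → ∃ 𝒱 ⊆ 𝒰, #𝒱 ≤ sLTheta 1 X ∧ A ⊆ closure (⋃₀ 𝒱) :=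
  (csInf_mem ⟨max ℵ₀ #(Set X), le_max_left _ _, fun A 𝒰 _ hA =>
    ⟨𝒰, subset_rfl, (mk_set_le 𝒰).trans (le_max_right _ _),
      (subset_thetaCl_one A).trans (hA.trans subset_closure)⟩⟩ : sLTheta 1 X ∈ _)

theorem exists_isThetaBase_mk_le_kappaTheta (x : X) :
    ∃ 𝒪, IsThetaBase x 𝒪 ∧ #𝒪 ≤ kappaTheta 1 X := by
  obtain ⟨𝒱, h𝒱κ, h𝒱, h𝒱cof⟩ := (kappaTheta_spec 1 X).2 x
  choose U hU hxU hWU using fun W : 𝒱 => isClosedNHull_one_singleton_iff.1 (h𝒱 W W.2)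
  refine ⟨range U, ⟨?_, fun V hV hxV => ?_⟩, mk_range_le.trans h𝒱κ⟩
  · rintro _ ⟨W, rfl⟩
    exact ⟨hU W, hxU W⟩
  · obtain ⟨W, hW, hWV⟩ :=
      h𝒱cof (closure V) (isClosedNHull_one_singleton_iff.2 ⟨V, hV, hxV, rfl⟩)
    exact ⟨U ⟨W, hW⟩, mem_range_self _, hWU ⟨W, hW⟩ ▸ hWV⟩

variable {κ : Cardinal.{u}} {𝒪 : X → Set (Set X)}

theorem mk_thetaCl_one_le_pow [T25Space X] (hκ : ℵ₀ ≤ κ) (h𝒪 : ∀ x, IsThetaBase x (𝒪 x))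
    (h𝒪κ : ∀ x, #(𝒪 x) ≤ κ) (M : Set X) : #(thetaCl 1 M) ≤ #M ^ κ := by
  have henum : ∀ x, ∃ e : κ.out → 𝒪 x, Function.Surjective e := fun x => by
    have : Nonempty (𝒪 x) := (h𝒪 x).nonempty.to_subtype
    obtain ⟨f⟩ := (mk_out κ).symm ▸ h𝒪κ x
    exact ⟨Function.invFun f, Function.invFun_surjective f.injective⟩
  choose e he using henum
  choose p hpM hp using fun (y : thetaCl 1 M) (ij : κ.out × κ.out) =>
    (h𝒪 y).exists_mem_closure_inter_closure y.2 (e y ij.1).2 (e y ij.2).2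
  have hinj : Function.Injective fun y ij => (⟨p y ij, hpM y ij⟩ : M) := by
    intro y y' hyy'
    by_contra hne
    obtain ⟨P, hyP, hP, Q, hy'Q, hQ, hPQ⟩ :=
      exists_open_nhds_disjoint_closure (Subtype.coe_ne_coe.2 hne)
    obtain ⟨O, hO, hOP⟩ := (h𝒪 y).2 P hP hyP
    obtain ⟨O', hO', hO'Q⟩ := (h𝒪 y').2 Q hQ hy'Q
    obtain ⟨i, hi⟩ := he y ⟨O, hO⟩
    obtain ⟨j, hj⟩ := he y' ⟨O', hO'⟩
    have hyi : p y (i, j) ∈ closure (e y i : Set X) := (hp y (i, j)).1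
    have hy'j : p y' (i, j) ∈ closure (e y' j : Set X) := (hp y' (i, j)).2
    rw [hi] at hyi
    rw [hj] at hy'j
    exact hPQ.ne_of_mem (hOP hyi) (hO'Q hy'j) (congrArg Subtype.val (congrFun hyy' (i, j)))
  calc #(thetaCl 1 M)
    _ ≤ #(κ.out × κ.out → M) := mk_le_of_injective hinj
    _ = #M ^ κ := by rw [← power_def, mk_prod, mk_out, lift_id, mul_eq_self hκ]

def thetaStep (κ : Cardinal.{u}) (𝒪 : X → Set (Set X)) (S : Set X) : Set X :=
  thetaCl 1 S ∪ range fun 𝒱 : {𝒱 : Set (Set X) //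
    𝒱 ⊆ ⋃ x ∈ S, 𝒪 x ∧ #𝒱 ≤ κ ∧ (closure (⋃₀ 𝒱))ᶜ.Nonempty} => 𝒱.2.2.2.some

theorem mk_thetaStep_le [T25Space X] (hκ : ℵ₀ ≤ κ) (h𝒪 : ∀ x, IsThetaBase x (𝒪 x))
    (h𝒪κ : ∀ x, #(𝒪 x) ≤ κ) {S : Set X} (hS : #S ≤ κ) : #(thetaStep κ 𝒪 S) ≤ 2 ^ κ := by
  have hbase : #(⋃ x ∈ S, 𝒪 x) ≤ κ :=
    (mk_biUnion_le _ _).trans <|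
      (mul_le_mul' hS (ciSup_le' fun x : S => h𝒪κ x)).trans (mul_eq_self hκ).le
  have hfam : #{𝒱 : Set (Set X) //
      𝒱 ⊆ ⋃ x ∈ S, 𝒪 x ∧ #𝒱 ≤ κ ∧ (closure (⋃₀ 𝒱))ᶜ.Nonempty} ≤ κ ^ κ :=
    calc _ ≤ #{𝒱 : Set (Set X) // 𝒱 ⊆ ⋃ x ∈ S, 𝒪 x ∧ #𝒱 ≤ κ} :=
          mk_subtype_mono fun _ h => ⟨h.1, h.2.1⟩
      _ ≤ max #(⋃ x ∈ S, 𝒪 x) ℵ₀ ^ κ := mk_bounded_subset_le _ _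
      _ ≤ κ ^ κ := power_le_power_right (max_le hbase hκ)
  calc #(thetaStep κ 𝒪 S)
    _ ≤ #S ^ κ + κ ^ κ :=
        (mk_union_le _ _).trans <|
          add_le_add (mk_thetaCl_one_le_pow hκ h𝒪 h𝒪κ S) (mk_range_le.trans hfam)
    _ ≤ κ ^ κ + κ ^ κ := add_le_add (power_le_power_right hS) le_rfl
    _ = 2 ^ κ := by rw [power_self_eq hκ, add_eq_self (hκ.trans (cantor κ).le)]

variable {H : Set X}

theorem thetaCl_one_subset_of_thetaStep_subset (h𝒪 : ∀ x, IsThetaBase x (𝒪 x))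
    (h𝒪κ : ∀ x, #(𝒪 x) ≤ κ) (hH : ∀ S ⊆ H, #S ≤ κ → thetaStep κ 𝒪 S ⊆ H) :
    thetaCl 1 H ⊆ H := fun _ hy =>
  let ⟨S, hSH, hSκ, hyS⟩ := (h𝒪 _).exists_subset_mem_thetaCl_one hy
  hH S hSH (hSκ.trans (h𝒪κ _)) (subset_union_left hyS)

theorem eq_univ_of_thetaStep_subset (h𝒪 : ∀ x, IsThetaBase x (𝒪 x))
    (h𝒪κ : ∀ x, #(𝒪 x) ≤ κ)
    (hsL : ∀ (A : Set X) (𝒰 : Set (Set X)), (∀ U ∈ 𝒰, IsOpen U) → thetaCl 1 A ⊆ ⋃₀ 𝒰 →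
      ∃ 𝒱 ⊆ 𝒰, #𝒱 ≤ κ ∧ A ⊆ closure (⋃₀ 𝒱))
    (hH : ∀ S ⊆ H, #S ≤ κ → thetaStep κ 𝒪 S ⊆ H) : H = Set.univ := by
  have hθH := thetaCl_one_subset_of_thetaStep_subset h𝒪 h𝒪κ hH
  refine eq_univ_of_forall fun q => by_contra fun hqH => ?_
  obtain ⟨P, hP, hqP, hPH⟩ : ∃ P, IsOpen P ∧ q ∈ P ∧ Disjoint (closure P) H := by
    simpa [mem_thetaCl_one_iff, not_nonempty_iff_eq_empty, disjoint_iff_inter_eq_empty]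
      using mt (@hθH q) hqH
  let 𝒰 := {O ∈ ⋃ x ∈ H, 𝒪 x | Disjoint O P}
  have h𝒰 : thetaCl 1 H ⊆ ⋃₀ 𝒰 := fun y hy => by
    have hyP : y ∉ closure P := hPH.notMem_of_mem_right (hθH hy)
    obtain ⟨O, hO, hOP⟩ := (h𝒪 y).2 _ isClosed_closure.isOpen_compl hyP
    have hdisj : Disjoint (closure (closure P)ᶜ) P :=
      (disjoint_compl_left.mono_right subset_closure).closure_left hP
    exact ⟨O, ⟨mem_biUnion (hθH hy) hO, (hdisj.mono_left (subset_closure.trans hOP))⟩,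
      ((h𝒪 y).1 O hO).2⟩
  have h𝒰open : ∀ O ∈ 𝒰, IsOpen O := fun O hO => by
    obtain ⟨x, -, hx⟩ := mem_iUnion₂.1 hO.1
    exact ((h𝒪 x).1 O hx).1
  obtain ⟨𝒱, h𝒱𝒰, h𝒱κ, hH𝒱⟩ := hsL H 𝒰 h𝒰open h𝒰
  have hq : q ∈ (closure (⋃₀ 𝒱))ᶜ := fun hq =>
    ((disjoint_sUnion_right.2 fun O hO => (h𝒱𝒰 hO).2.symm).closure_right hP).notMem_of_mem_left
      hqP hq
  obtain ⟨S, hSH, hS𝒱, h𝒱S⟩ := exists_subset_mk_le_of_subset_biUnion fun O hO => (h𝒱𝒰 hO).1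
  let 𝒲 : {𝒱 : Set (Set X) // 𝒱 ⊆ ⋃ x ∈ S, 𝒪 x ∧ #𝒱 ≤ κ ∧ (closure (⋃₀ 𝒱))ᶜ.Nonempty} :=
    ⟨𝒱, h𝒱S, h𝒱κ, q, hq⟩
  have hmem : 𝒲.2.2.2.some ∈ H :=
    hH S hSH (hS𝒱.trans h𝒱κ) (subset_union_right (mem_range_self 𝒲))
  exact 𝒲.2.2.2.some_mem (hH𝒱 hmem)

theorem mk_le_two_power_of_isThetaBase [T25Space X] (hκ : ℵ₀ ≤ κ)
    (h𝒪 : ∀ x, IsThetaBase x (𝒪 x)) (h𝒪κ : ∀ x, #(𝒪 x) ≤ κ)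
    (hsL : ∀ (A : Set X) (𝒰 : Set (Set X)), (∀ U ∈ 𝒰, IsOpen U) → thetaCl 1 A ⊆ ⋃₀ 𝒰 →
      ∃ 𝒱 ⊆ 𝒰, #𝒱 ≤ κ ∧ A ⊆ closure (⋃₀ 𝒱)) :
    #X ≤ 2 ^ κ := by
  obtain ⟨H, hHκ, hH⟩ := exists_mk_le_two_power_closed_under_small (F := thetaStep κ 𝒪) hκ
    fun _ hS => mk_thetaStep_le hκ h𝒪 h𝒪κ hS
  rwa [eq_univ_of_thetaStep_subset h𝒪 h𝒪κ hsL hH, mk_univ] at hHκ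

end ThetaClosure

theorem stmt2 (X : Type u) [TopologicalSpace X]
    (hX : ∀ x y : X, x ≠ y → ∃ U V : Set X, IsOpen U ∧ IsOpen V ∧ x ∈ U ∧ y ∈ V ∧
      closure U ∩ closure V = ∅) :
    #X ≤ 2 ^ (sLTheta 1 X * kappaTheta 1 X) := by
  have : T25Space X := ⟨fun x y hxy => by
    obtain ⟨U, V, hU, hV, hxU, hyV, hUV⟩ := hX x y hxy
    exact ((nhds_basis_opens x).lift'_closure.disjoint_iff (nhds_basis_opens y).lift'_closure).2
      ⟨U, ⟨hxU, hU⟩, V, ⟨hyV, hV⟩, disjoint_iff_inter_eq_empty.2 hUV⟩⟩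
  obtain ⟨hsL₀, hsL⟩ := sLTheta_one_spec X
  have hκ₀ := (kappaTheta_spec 1 X).1
  have hsL_le : sLTheta 1 X ≤ sLTheta 1 X * kappaTheta 1 X :=
    le_mul_right (aleph0_pos.trans_le hκ₀).ne'
  have hκ_le : kappaTheta 1 X ≤ sLTheta 1 X * kappaTheta 1 X :=
    le_mul_left (aleph0_pos.trans_le hsL₀).ne'
  choose 𝒪 h𝒪 h𝒪κ using exists_isThetaBase_mk_le_kappaTheta (X := X)
  refine mk_le_two_power_of_isThetaBase (hsL₀.trans hsL_le) h𝒪 (fun x => (h𝒪κ x).trans hκ_le)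
    fun A 𝒰 hU hA => ?_
  obtain ⟨𝒱, h𝒱𝒰, h𝒱, hA𝒱⟩ := hsL A 𝒰 hU hA
  exact ⟨𝒱, h𝒱𝒰, h𝒱.trans hsL_le, hA𝒱⟩
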